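/- arXiv:2501.06926 — 4 statements merged into one kernel-verified Lean document; each statement's English description precedes it below -/
import Mathlib

section
/- Let H be a Hilbert space with subspaces (closed) H₁ ⊆ H₂. Let T : H₂ → H₂ be continuous and invertible with T(H₁) = H₁, and let L be a bounded linear functional on H₂ with Riesz representers α₁ ∈ H₁ and α₂ ∈ H₂ with respect to the weak inner product ⟨T·, T·⟩ (i.e., L(q) = ⟨Tαᵢ, Tq⟩ for all q ∈ Hᵢ). Let q₂ ∈ H₂ and let q₁ ∈ H₁ be the minimizer of ‖T(q₂) - T(q)‖ over q ∈ H₁. Then L(q₁) - L(q₂) = -⟨T(α₁) - T(α₂), T(q₁) - T(q₂)⟩. -/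
open scoped RealInnerProductSpace

/-! The best approximation `T q₁` of `T q₂` from the subspace `T(H₁)` leaves a residual
orthogonal to `T(H₁)`, in particular to `T α₁`. Hence
`⟪T α₁ - T α₂, T q₁ - T q₂⟫ = -⟪T α₂, T q₁ - T q₂⟫ = -(L q₁ - L q₂)`. -/

theorem Submodule.real_inner_sub_eq_zero_of_forall_norm_sub_le
    {F : Type*} [NormedAddCommGroup F] [InnerProductSpace ℝ F]
    (K : Submodule ℝ F) {u v : F} (hv : v ∈ K) (hmin : ∀ w ∈ K, ‖u - v‖ ≤ ‖u - w‖) :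
    ∀ w ∈ K, ⟪u - v, w⟫ = 0 := by
  have hleast : IsLeast (Set.range fun w : (K : Set F) => ‖u - w‖) ‖u - v‖ :=
    ⟨⟨⟨v, hv⟩, rfl⟩, by rintro _ ⟨w, rfl⟩; exact hmin w w.2⟩
  exact (K.norm_eq_iInf_iff_real_inner_eq_zero hv).1 hleast.isGLB.ciInf_eq.symm

theorem model_approximation_error_second_order_general
    {E : Type*} [NormedAddCommGroup E] [InnerProductSpace ℝ E]
    (H₁ : Submodule ℝ E)
    (T : E →L[ℝ] E)
    (L : E →L[ℝ] ℝ)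
    (α₁ α₂ : E) (hα₁mem : α₁ ∈ H₁)
    (hα₂ : ∀ q : E, L q = ⟪T α₂, T q⟫)
    (q₂ : E) (q₁ : E) (hq₁mem : q₁ ∈ H₁)
    (hq₁ : ∀ q ∈ H₁, ‖T q₂ - T q₁‖ ≤ ‖T q₂ - T q‖) :
    L q₁ - L q₂ = -⟪T α₁ - T α₂, T q₁ - T q₂⟫ := by
  have horth : ⟪T q₂ - T q₁, T α₁⟫ = 0 :=
    (H₁.map (T : E →ₗ[ℝ] E)).real_inner_sub_eq_zero_of_forall_norm_sub_le
      (Submodule.mem_map_of_mem hq₁mem) (by rintro _ ⟨q, hq, rfl⟩; exact hq₁ q hq)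
      _ (Submodule.mem_map_of_mem hα₁mem)
  calc L q₁ - L q₂ = ⟪T α₂, T q₁ - T q₂⟫ := by rw [hα₂, hα₂, inner_sub_right]
    _ = -⟪T α₁ - T α₂, T q₁ - T q₂⟫ := by
      rw [inner_sub_left, ← neg_sub (T q₂), inner_neg_right, inner_neg_right,
        real_inner_comm _ (T α₁), horth]
      ring

/-- Second-order model approximation error. With `H₂` the ambient
Hilbert space and `H₁ ⊆ H₂` a closed subspace, `T` invertible with `T(H₁) = H₁`,
`L` a bounded linear functional with weak-norm Riesz representers `α₁ ∈ H₁` (over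
`H₁`) and `α₂` (over `H₂`), `q₂` arbitrary and `q₁ ∈ H₁` the minimizer of
`‖T q₂ - T q‖` over `q ∈ H₁`, one has
`L q₁ - L q₂ = -⟪T α₁ - T α₂, T q₁ - T q₂⟫`. -/
theorem model_approximation_error_second_order
    {E : Type*} [NormedAddCommGroup E] [InnerProductSpace ℝ E] [CompleteSpace E]
    (H₁ : Submodule ℝ E) (hH₁ : IsClosed (H₁ : Set E))
    (T : E →L[ℝ] E) (Tinv : E →L[ℝ] E)
    (hT : T ∘L Tinv = 1 ∧ Tinv ∘L T = 1)
    (hTmap : Submodule.map (T : E →ₗ[ℝ] E) H₁ = H₁)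
    (L : E →L[ℝ] ℝ)
    (α₁ α₂ : E) (hα₁mem : α₁ ∈ H₁)
    (hα₁ : ∀ q ∈ H₁, L q = ⟪T α₁, T q⟫)
    (hα₂ : ∀ q : E, L q = ⟪T α₂, T q⟫)
    (q₂ : E) (q₁ : E) (hq₁mem : q₁ ∈ H₁)
    (hq₁ : ∀ q ∈ H₁, ‖T q₂ - T q₁‖ ≤ ‖T q₂ - T q‖) :
    L q₁ - L q₂ = -⟪T α₁ - T α₂, T q₁ - T q₂⟫ :=
  model_approximation_error_second_order_general H₁ T L α₁ α₂ hα₁mem hα₂ q₂ q₁ hq₁mem hq₁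
end

section
/- Let X be a random variable, q₀, qₙ : 𝒳 → ℝ measurable, and Y integrable. Define f₍qₙ,q₀₎(x) = E[Y | qₙ(X) = qₙ(x), q₀(X) = q₀(x)] and f₍qₙ₎(x) = E[Y | qₙ(X) = qₙ(x)]. Suppose the map (t₁,t₂) ↦ E[f₍qₙ,q₀₎(X) | qₙ(X)=t₁, q₀(X)=t₂] is L-Lipschitz on ℝ². Then ‖f₍qₙ₎ - f₍qₙ,q₀₎‖_{L²(P)} ≤ 2L · ‖qₙ - q₀‖_{L²(P)}. -/
/-!
With `G = g (qₙ X, q₀ X) = E[Y | qₙ X, q₀ X]`, the function `h = g (qₙ X, qₙ X)` is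
`qₙ X`-measurable, and by the tower property
`E[Y | qₙ X] - E[Y | qₙ X, q₀ X] = E[G - h | qₙ X] - (G - h)`.
Conditional expectation contracts `L²`, so the left side has norm at most `2 ‖G - h‖₂`,
and `|G - h| ≤ L |qₙ X - q₀ X|` pointwise because `g` is `L`-Lipschitz.
-/

open MeasureTheory
open scoped ENNReal NNReal

theorem LipschitzWith.eLpNorm_comp_sub_le {Ω E F : Type*} [MeasurableSpace Ω]
    [SeminormedAddCommGroup E] [SeminormedAddCommGroup F] {K : ℝ≥0} {g : E → F}
    (hg : LipschitzWith K g) (u v : Ω → E) (p : ℝ≥0∞) (μ : Measure Ω) :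
    eLpNorm (fun ω => g (u ω) - g (v ω)) p μ ≤ K * eLpNorm (fun ω => u ω - v ω) p μ := by
  have hle : ∀ ω, ‖g (u ω) - g (v ω)‖ₑ ≤ K * ‖u ω - v ω‖ₑ := fun ω => by
    simpa only [edist_eq_enorm_sub] using hg (u ω) (v ω)
  simpa only [ENNReal.smul_def, smul_eq_mul] using
    eLpNorm_le_nnreal_smul_eLpNorm_of_ae_le_mul' (μ := μ) (ae_of_all _ hle) p

theorem eLpNorm_prodMk_sub_prodMk_left {Ω E F : Type*} [MeasurableSpace Ω]
    [SeminormedAddCommGroup E] [SeminormedAddCommGroup F] (a : Ω → E) (b c : Ω → F)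
    (p : ℝ≥0∞) (μ : Measure Ω) :
    eLpNorm (fun ω => (a ω, b ω) - (a ω, c ω)) p μ = eLpNorm (fun ω => b ω - c ω) p μ :=
  eLpNorm_congr_enorm_ae <| ae_of_all _ fun ω => by
    rw [Prod.mk_sub_mk, sub_self, ← ofReal_norm, ← ofReal_norm, Prod.norm_mk, norm_zero,
      max_eq_right (norm_nonneg _)]

theorem eLpNorm_condExp_sub_condExp_le {Ω : Type*} {m₁ m₂ m₀ : MeasurableSpace Ω}
    {μ : Measure[m₀] Ω} [IsFiniteMeasure μ] (hm₁₂ : m₁ ≤ m₂) (hm₂ : m₂ ≤ m₀)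
    {p : ℝ≥0∞} (hp : 1 ≤ p) (Y : Ω → ℝ) {h : Ω → ℝ} (hh : StronglyMeasurable[m₁] h) :
    eLpNorm (μ[Y|m₁] - μ[Y|m₂]) p μ ≤ 2 * eLpNorm (μ[Y|m₂] - h) p μ := by
  set D := μ[Y|m₂] - h
  have hm₁ : m₁ ≤ m₀ := hm₁₂.trans hm₂
  by_cases hD_top : eLpNorm D p μ = ∞
  · simp [hD_top]
  have hD : MemLp D p μ :=
    ⟨(stronglyMeasurable_condExp.mono hm₂).aestronglyMeasurable.sub
      (hh.mono hm₁).aestronglyMeasurable, lt_top_iff_ne_top.mpr hD_top⟩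
  have hh_int : Integrable h μ := by
    simpa [D] using (integrable_condExp (m := m₂) (f := Y)).sub (hD.integrable hp)
  -- tower property, and `μ[h|m₁] = h`
  have hdiff : μ[Y|m₁] - μ[Y|m₂] =ᵐ[μ] μ[D|m₁] - D := by
    filter_upwards [condExp_condExp_of_le (μ := μ) (f := Y) hm₁₂ hm₂,
      condExp_sub (m := m₁) (integrable_condExp (m := m₂) (f := Y)) hh_int] with ω htower hsub
    simp only [D, Pi.sub_apply, hsub, condExp_of_stronglyMeasurable hm₁ hh hh_int, htower]
    ring
  calc eLpNorm (μ[Y|m₁] - μ[Y|m₂]) p μ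
      = eLpNorm (μ[D|m₁] - D) p μ := eLpNorm_congr_ae hdiff
    _ ≤ eLpNorm (μ[D|m₁]) p μ + eLpNorm D p μ :=
      eLpNorm_sub_le (stronglyMeasurable_condExp.mono hm₁).aestronglyMeasurable hD.1 hp
    _ ≤ eLpNorm D p μ + eLpNorm D p μ := by gcongr; exact eLpNorm_condExp_le_eLpNorm D hp
    _ = 2 * eLpNorm D p μ := (two_mul _).symm

theorem lipschitz_feature_approximation_general
    {Ω 𝒳 : Type*} [MeasurableSpace Ω] [MeasurableSpace 𝒳]
    (μ : Measure Ω) [IsProbabilityMeasure μ]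
    (X : Ω → 𝒳) (hX : Measurable X)
    (q₀ qₙ : 𝒳 → ℝ) (hq₀ : Measurable q₀) (hqₙ : Measurable qₙ)
    (Y : Ω → ℝ)
    (L : ℝ≥0) (g : ℝ × ℝ → ℝ) (hg : LipschitzWith L g)
    (hgver : (fun ω => g (qₙ (X ω), q₀ (X ω))) =ᵐ[μ]
      μ[Y | MeasurableSpace.comap (fun ω => (qₙ (X ω), q₀ (X ω)))
            (borel (ℝ × ℝ))]) :
    eLpNorm (fun ω =>
        (μ[Y | MeasurableSpace.comap (fun ω' => qₙ (X ω')) (borel ℝ)]) ω -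
        (μ[Y | MeasurableSpace.comap (fun ω' => (qₙ (X ω'), q₀ (X ω')))
              (borel (ℝ × ℝ))]) ω) 2 μ
      ≤ (2 * L : ℝ≥0) * eLpNorm (fun ω => qₙ (X ω) - q₀ (X ω)) 2 μ := by
  simp only [← BorelSpace.measurable_eq] at hgver ⊢
  set Q : Ω → ℝ × ℝ := fun ω => (qₙ (X ω), q₀ (X ω))
  have hQ : Measurable Q := (hqₙ.comp hX).prodMk (hq₀.comp hX)
  have hm₁₂ : MeasurableSpace.comap (fun ω => qₙ (X ω)) inferInstance
      ≤ MeasurableSpace.comap Q inferInstance :=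
    MeasurableSpace.comap_le_comap_of_eq_comp Prod.fst measurable_fst rfl
  have hh : StronglyMeasurable[MeasurableSpace.comap (fun ω => qₙ (X ω)) inferInstance]
      (fun ω => g (qₙ (X ω), qₙ (X ω))) :=
    (hg.continuous.measurable.comp (measurable_id.prodMk measurable_id)).comp
      (comap_measurable _) |>.stronglyMeasurable
  calc _ ≤ 2 * eLpNorm (μ[Y|_] - fun ω => g (qₙ (X ω), qₙ (X ω))) 2 μ :=
        eLpNorm_condExp_sub_condExp_le hm₁₂ hQ.comap_le one_le_two Y hh
    _ = 2 * eLpNorm (fun ω => g (Q ω) - g (qₙ (X ω), qₙ (X ω))) 2 μ := by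
        rw [eLpNorm_congr_ae (hgver.symm.sub (ae_eq_refl _))]; rfl
    _ ≤ 2 * (L * eLpNorm (fun ω => q₀ (X ω) - qₙ (X ω)) 2 μ) := by
        grw [hg.eLpNorm_comp_sub_le, eLpNorm_prodMk_sub_prodMk_left]
    _ = 2 * (L * eLpNorm (fun ω => qₙ (X ω) - q₀ (X ω)) 2 μ) := by
        rw [← Pi.sub_def, eLpNorm_sub_comm, Pi.sub_def]
    _ = (2 * L : ℝ≥0) * eLpNorm (fun ω => qₙ (X ω) - q₀ (X ω)) 2 μ := by
        push_cast; ring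

/-- If the conditional expectation of `Y` given the pair
`(qₙ(X), q₀(X))` factors as an `L`-Lipschitz function `g` of `(qₙ(X), q₀(X))`,
then the `L²` distance between the conditional expectation given `qₙ(X)` alone
and the one given the pair is bounded by `2L` times the `L²` distance between
`qₙ(X)` and `q₀(X)`. -/
theorem lipschitz_feature_approximation
    {Ω 𝒳 : Type*} [MeasurableSpace Ω] [MeasurableSpace 𝒳]
    (μ : Measure Ω) [IsProbabilityMeasure μ]
    (X : Ω → 𝒳) (hX : Measurable X)
    (q₀ qₙ : 𝒳 → ℝ) (hq₀ : Measurable q₀) (hqₙ : Measurable qₙ)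
    (Y : Ω → ℝ) (hY : Integrable Y μ)
    (L : ℝ≥0) (g : ℝ × ℝ → ℝ) (hg : LipschitzWith L g)
    (hgver : (fun ω => g (qₙ (X ω), q₀ (X ω))) =ᵐ[μ]
      μ[Y | MeasurableSpace.comap (fun ω => (qₙ (X ω), q₀ (X ω)))
            (borel (ℝ × ℝ))]) :
    eLpNorm (fun ω =>
        (μ[Y | MeasurableSpace.comap (fun ω' => qₙ (X ω')) (borel ℝ)]) ω -
        (μ[Y | MeasurableSpace.comap (fun ω' => (qₙ (X ω'), q₀ (X ω')))
              (borel (ℝ × ℝ))]) ω) 2 μ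
      ≤ (2 * L : ℝ≥0) * eLpNorm (fun ω => qₙ (X ω) - q₀ (X ω)) 2 μ :=
  lipschitz_feature_approximation_general μ X hX q₀ qₙ hq₀ hqₙ Y L g hg hgver
end

section
/- Let (A₀,S₀) be a random state–action pair, S₁ a next state, Y₀ a bounded reward, and q₀ a bounded measurable function satisfying the Bellman equation q₀(A₀,S₀) = E[Y₀ + γ V(q₀)(S₁) | A₀, S₀] almost surely, where V(q)(s') = ∫ q(a',s') π(a'|s') dν(a'). Then q₀ also satisfies the dimension-reduced Bellman equation q₀(A₀,S₀) = E[Y₀ + γ V(q₀)(S₁) | q₀(A₀,S₀)] almost surely. -/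
open MeasureTheory

/-- Dimension-reduced Bellman equation. If the (bounded,
measurable) `Q`-function `q₀` satisfies the Bellman equation
`q₀(A₀,S₀) = E[Y₀ + γ V(q₀)(S₁) | A₀, S₀]` a.s., with
`V(q)(s') = ∫ q(a',s') π(a'|s') dν(a')`, then it also satisfies
`q₀(A₀,S₀) = E[Y₀ + γ V(q₀)(S₁) | q₀(A₀,S₀)]` a.s. -/
theorem dimension_reduced_bellman
    {Ω 𝒜 𝒮 : Type*} [MeasurableSpace Ω] [MeasurableSpace 𝒜] [MeasurableSpace 𝒮]
    (μ : Measure Ω) [IsProbabilityMeasure μ]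
    (ν : Measure 𝒜)
    (AS : Ω → 𝒜 × 𝒮) (hAS : Measurable AS)
    (S₁ : Ω → 𝒮) (hS₁ : Measurable S₁)
    (Y₀ : Ω → ℝ) (hY₀ : Integrable Y₀ μ)
    (γ : ℝ) (hγ : γ ∈ Set.Ico (0 : ℝ) 1)
    (π : 𝒜 → 𝒮 → ℝ)
    (q₀ : 𝒜 × 𝒮 → ℝ) (hq₀ : Measurable q₀) (hq₀bdd : ∃ C, ∀ x, |q₀ x| ≤ C)
    (hbellman : (fun ω => q₀ (AS ω)) =ᵐ[μ]
      μ[fun ω => Y₀ ω + γ * ∫ a, q₀ (a, S₁ ω) * π a (S₁ ω) ∂ν |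
        MeasurableSpace.comap AS inferInstance]) :
    (fun ω => q₀ (AS ω)) =ᵐ[μ]
      μ[fun ω => Y₀ ω + γ * ∫ a, q₀ (a, S₁ ω) * π a (S₁ ω) ∂ν |
        MeasurableSpace.comap (fun ω => q₀ (AS ω)) (borel ℝ)] := by
  obtain ⟨C, hC⟩ := hq₀bdd
  have hm₂₁ : MeasurableSpace.comap (fun ω => q₀ (AS ω)) (borel ℝ)
      ≤ MeasurableSpace.comap AS inferInstance := by
    have : MeasurableSpace.comap (q₀ ∘ AS) (borel ℝ)
        ≤ MeasurableSpace.comap AS inferInstance := by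
      rw [← MeasurableSpace.comap_comp]
      refine MeasurableSpace.comap_mono ?_
      have : borel ℝ = (inferInstance : MeasurableSpace ℝ) := rfl
      rw [this]
      exact hq₀.comap_le
    exact this
  have hm₁ := hAS.comap_le
  have hm₂ := hm₂₁.trans hm₁
  have hmeas : Measurable[MeasurableSpace.comap (fun ω => q₀ (AS ω)) (borel ℝ)]
      (fun ω => q₀ (AS ω)) := Measurable.of_comap_le le_rfl
  have hint : Integrable (fun ω => q₀ (AS ω)) μ := by
    refine ⟨(hq₀.comp hAS).aestronglyMeasurable, ?_⟩
    refine HasFiniteIntegral.of_bounded (C := C) (ae_of_all _ fun ω => ?_)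
    simpa [Real.norm_eq_abs] using hC (AS ω)
  have hsm : StronglyMeasurable[MeasurableSpace.comap (fun ω => q₀ (AS ω)) (borel ℝ)]
      (fun ω => q₀ (AS ω)) := by
    borelize ℝ
    exact hmeas.stronglyMeasurable
  calc (fun ω => q₀ (AS ω))
      = μ[fun ω => q₀ (AS ω) | MeasurableSpace.comap (fun ω => q₀ (AS ω)) (borel ℝ)] :=
        (condExp_of_stronglyMeasurable hm₂ hsm hint).symm
    _ =ᵐ[μ] μ[μ[fun ω => Y₀ ω + γ * ∫ a, q₀ (a, S₁ ω) * π a (S₁ ω) ∂ν |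
          MeasurableSpace.comap AS inferInstance] |
          MeasurableSpace.comap (fun ω => q₀ (AS ω)) (borel ℝ)] :=
        condExp_congr_ae hbellman
    _ =ᵐ[μ] μ[fun ω => Y₀ ω + γ * ∫ a, q₀ (a, S₁ ω) * π a (S₁ ω) ∂ν |
          MeasurableSpace.comap (fun ω => q₀ (AS ω)) (borel ℝ)] :=
        condExp_condExp_of_le hm₂₁ hm₁
end

section
/- Let x₁,...,xₙ ∈ ℝ and y₁,...,yₙ ∈ ℝ, and let f* be a minimizer over the class of monotone nondecreasing functions F_iso of ∑ᵢ (yᵢ - f(xᵢ))² such that f* is piecewise constant with finitely many jumps at observed values of x. Then for every function h : ℝ → ℝ, ∑ᵢ h(f*(xᵢ)) (yᵢ - f*(xᵢ)) = 0. -/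
/-- Isotonic regression orthogonality. If `f*` is a monotone
nondecreasing step function (finitely many values) that minimizes
`∑ᵢ (yᵢ - f(xᵢ))²` over all monotone nondecreasing `f`, then for every
`h : ℝ → ℝ`, `∑ᵢ h(f*(xᵢ)) (yᵢ - f*(xᵢ)) = 0`. -/
theorem isotonic_calibration_orthogonality
    (n : ℕ) (x y : Fin n → ℝ)
    (fstar : ℝ → ℝ) (hmono : Monotone fstar)
    (hstep : (Set.range fstar).Finite)
    (hmin : ∀ f : ℝ → ℝ, Monotone f →
      ∑ i, (y i - fstar (x i)) ^ 2 ≤ ∑ i, (y i - f (x i)) ^ 2) :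
    ∀ h : ℝ → ℝ, ∑ i, h (fstar (x i)) * (y i - fstar (x i)) = 0 := by
  classical
  intro h
  set S := ∑ i, h (fstar (x i)) * (y i - fstar (x i)) with hSdef
  set T := ∑ i, (h (fstar (x i)))^2 with hTdef
  have hT0 : 0 ≤ T := Finset.sum_nonneg (fun i _ => sq_nonneg _)
  set F := hstep.toFinset with hF
  set P := (F ×ˢ F).filter (fun p => p.1 < p.2) with hP
  set c : ℝ × ℝ → ℝ := fun p => (p.2 - p.1) / (|h p.1 - h p.2| + 1) with hc
  have hcpos : ∀ p ∈ P, 0 < c p := by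
    intro p hp
    rw [hP, Finset.mem_filter] at hp
    exact div_pos (by linarith [hp.2]) (by positivity)
  set δ : ℝ := if hPne : P.Nonempty then P.inf' hPne c else 1 with hδdef
  have hδpos : 0 < δ := by
    by_cases hPne : P.Nonempty
    · rw [hδdef]
      simp only [hPne, dif_pos]
      obtain ⟨p, hp, hpe⟩ := Finset.exists_mem_eq_inf' hPne c
      rw [hpe]; exact hcpos p hp
    · rw [hδdef]; simp [hPne]
  have hδle : ∀ p ∈ P, δ ≤ c p := by
    intro p hp
    have hPne : P.Nonempty := ⟨p, hp⟩
    rw [hδdef]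
    simp only [hPne, dif_pos]
    exact Finset.inf'_le c hp
  -- perturbed function is monotone for |ε| ≤ δ
  have key : ∀ ε : ℝ, |ε| ≤ δ → Monotone (fun s => fstar s + ε * h (fstar s)) := by
    intro ε hε s t hst
    have hab : fstar s ≤ fstar t := hmono hst
    rcases eq_or_lt_of_le hab with heq | hlt
    · simp only [heq, le_refl]
    · set a := fstar s with ha
      set b := fstar t with hb
      have hpmem : (a, b) ∈ P := by
        rw [hP, Finset.mem_filter, Finset.mem_product]
        refine ⟨⟨?_, ?_⟩, hlt⟩
        · rw [hF, Set.Finite.mem_toFinset]; exact ⟨s, rfl⟩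
        · rw [hF, Set.Finite.mem_toFinset]; exact ⟨t, rfl⟩
      have h1 : δ ≤ (b - a) / (|h a - h b| + 1) := hδle _ hpmem
      have hd : (0:ℝ) < |h a - h b| + 1 := by positivity
      have h2 : δ * (|h a - h b| + 1) ≤ b - a := (le_div_iff₀ hd).mp h1
      have h3 : ε * (h a - h b) ≤ |ε| * |h a - h b| := by
        calc ε * (h a - h b) ≤ |ε * (h a - h b)| := le_abs_self _
        _ = |ε| * |h a - h b| := abs_mul _ _
      have h4 : |ε| * |h a - h b| ≤ δ * (|h a - h b| + 1) := by
        apply mul_le_mul hε (by linarith) (abs_nonneg _) hδpos.le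
      show a + ε * h a ≤ b + ε * h b
      nlinarith
  -- quadratic inequality
  have quad : ∀ ε : ℝ, |ε| ≤ δ → 2 * ε * S ≤ ε^2 * T := by
    intro ε hε
    have := hmin _ (key ε hε)
    have expand : ∑ i, (y i - (fstar (x i) + ε * h (fstar (x i))))^2
        = ∑ i, (y i - fstar (x i))^2 - 2 * ε * S + ε^2 * T := by
      rw [hSdef, hTdef, Finset.mul_sum, Finset.mul_sum, ← Finset.sum_sub_distrib,
        ← Finset.sum_add_distrib]
      apply Finset.sum_congr rfl
      intro i _
      ring
    rw [expand] at this
    linarith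
  -- conclude S = 0
  by_contra hS0
  rcases lt_or_gt_of_ne hS0 with hneg | hpos
  · set m := min δ (-S/(T+1)) with hmdef
    have hden : (0:ℝ) < T + 1 := by linarith
    have hdiv : 0 < -S/(T+1) := div_pos (by linarith) hden
    have hm : 0 < m := lt_min hδpos hdiv
    have hεabs : |(-m)| ≤ δ := by
      rw [abs_neg, abs_of_pos hm]; exact min_le_left _ _
    have hq := quad (-m) hεabs
    have h5 : m ≤ -S/(T+1) := min_le_right _ _
    have h6' : (-S/(T+1))*T = -S - (-S/(T+1)) := by field_simp; ring
    have hA : m*T ≤ (-S/(T+1))*T := mul_le_mul_of_nonneg_right h5 hT0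
    have hB : m*T ≤ -S := by linarith
    have hC : m*(m*T) ≤ m*(-S) := mul_le_mul_of_nonneg_left hB hm.le
    have hD : 0 < m*(-S) := mul_pos hm (by linarith)
    nlinarith
  · set m := min δ (S/(T+1)) with hmdef
    have hden : (0:ℝ) < T + 1 := by linarith
    have hdiv : 0 < S/(T+1) := div_pos hpos hden
    have hm : 0 < m := lt_min hδpos hdiv
    have hεabs : |m| ≤ δ := by rw [abs_of_pos hm]; exact min_le_left _ _
    have hq := quad m hεabs
    have h5 : m ≤ S/(T+1) := min_le_right _ _
    have h6' : (S/(T+1))*T = S - S/(T+1) := by field_simp; ring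
    have hA : m*T ≤ (S/(T+1))*T := mul_le_mul_of_nonneg_right h5 hT0
    have hB : m*T ≤ S := by linarith
    have hC : m*(m*T) ≤ m*S := mul_le_mul_of_nonneg_left hB hm.le
    have hD : 0 < m*S := mul_pos hm hpos
    nlinarith
end
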